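/- arXiv:math/0411125 — 2 statements merged into one kernel-verified Lean document; each statement's English description precedes it below -/
import Mathlib

section
/- Let A be a commutative ring, P a finitely generated projective A-module, and t a non-zero-divisor of A such that the localization P_t is a free A_t-module of rank d. Then there exists a free submodule F ≅ A^d of P and a positive integer l such that, setting s = t^l, one has sP ⊆ F. -/
/-!
Every basis vector of `P_t` becomes, after multiplication by a power of `t` (a unit of `A_t`), the
image of an element `q_i ∈ P`. The `q_i` are linearly independent over `A` because `A → A_t` is
injective, so they span a free submodule `F` with `F_t = P_t`. Hence each element of `P` is pushed
into `F` by some power of `t`, and since `P` is finitely generated one power works for all of `P`.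
-/

open Submodule

section

variable {R : Type*} [CommSemiring R] (S : Submonoid R) {M : Type*} [AddCommMonoid M] [Module R M]

theorem Submodule.exists_smul_mem_of_forall_exists_smul_mem [Module.Finite R M]
    {N : Submodule R M} (h : ∀ x : M, ∃ s : S, (s : R) • x ∈ N) :
    ∃ s : S, ∀ x : M, (s : R) • x ∈ N := by
  classical
  obtain ⟨G, hG⟩ := Module.Finite.fg_top (R := R) (M := M)
  choose s hs using h
  refine ⟨∏ g ∈ G, s g, fun x => ?_⟩
  have hle : span R (G : Set M) ≤ N.comap (LinearMap.lsmul R M (∏ g ∈ G, s g : S)) := by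
    rw [span_le]
    intro g hg
    simp only [SetLike.mem_coe, mem_comap, LinearMap.lsmul_apply, ← Finset.prod_erase_mul G s hg,
      Submonoid.coe_mul, mul_smul]
    exact N.smul_mem _ (hs g)
  exact hle (hG ▸ mem_top)

variable {Rₛ : Type*} [CommSemiring Rₛ] [Algebra R Rₛ] [IsLocalization S Rₛ]
  {Mₛ : Type*} [AddCommMonoid Mₛ] [Module R Mₛ] [Module Rₛ Mₛ] [IsScalarTower R Rₛ Mₛ]

theorem Submodule.exists_smul_mem_of_localized'_eq_top [Module.Finite R M]
    (f : M →ₗ[R] Mₛ) [IsLocalizedModule S f] {N : Submodule R M}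
    (hN : N.localized' Rₛ S f = ⊤) : ∃ s : S, ∀ x : M, (s : R) • x ∈ N := by
  refine exists_smul_mem_of_forall_exists_smul_mem S fun x => ?_
  have hx : f x ∈ span Rₛ (f '' N) := localized'_eq_span Rₛ S f N ▸ hN ▸ mem_top
  obtain ⟨s, hs⟩ := multiple_mem_span_of_mem_localization_span S Rₛ _ _ hx
  rw [← map_coe, span_eq] at hs
  obtain ⟨y, hy, hfy⟩ := hs
  have hfy' : f y = f ((s : R) • x) := by rw [hfy, map_smul, Submonoid.smul_def]
  obtain ⟨c, hc⟩ := IsLocalizedModule.exists_of_eq (S := S) hfy'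
  refine ⟨c * s, ?_⟩
  rw [Submonoid.coe_mul, mul_smul, ← Submonoid.smul_def c, ← hc]
  exact N.smul_mem _ hy

theorem IsLocalizedModule.exists_basis_eq_comp (f : M →ₗ[R] Mₛ) [IsLocalizedModule S f]
    {ι : Type*} (b : Module.Basis ι Rₛ Mₛ) :
    ∃ (v : ι → M) (b' : Module.Basis ι Rₛ Mₛ), ⇑b' = f ∘ v := by
  have hsurj : ∀ i, ∃ x : M × S, x.2 • b i = f x.1 := fun i => surj S f (b i)
  choose x hx using hsurj
  refine ⟨fun i => (x i).1,
    b.unitsSMul fun i => (IsLocalization.map_units Rₛ (x i).2).unit, funext fun i => ?_⟩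
  rw [Module.Basis.unitsSMul_apply, Units.smul_def, IsUnit.unit_spec, algebraMap_smul,
    ← Submonoid.smul_def, hx i, Function.comp_apply]

theorem IsLocalizedModule.exists_free_submodule_smul_mem [Module.Finite R M]
    (f : M →ₗ[R] Mₛ) [IsLocalizedModule S f] (hinj : Function.Injective (algebraMap R Rₛ))
    {ι : Type*} (b : Module.Basis ι Rₛ Mₛ) :
    ∃ (F : Submodule R M) (s : S), Nonempty (Module.Basis ι R F) ∧ ∀ x : M, (s : R) • x ∈ F := by
  obtain ⟨v, b', hb'⟩ := exists_basis_eq_comp S f b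
  have : FaithfulSMul R Rₛ := (faithfulSMul_iff_algebraMap_injective R Rₛ).mpr hinj
  have hv : LinearIndependent R v :=
    ((hb' ▸ b'.linearIndependent).restrict_scalars' R).of_comp f
  obtain ⟨s, hs⟩ := exists_smul_mem_of_localized'_eq_top S f (N := span R (Set.range v)) <| by
    rw [localized'_span Rₛ, ← Set.range_comp, ← hb', b'.span_eq]
  exact ⟨_, s, ⟨.span hv⟩, hs⟩

end

theorem exists_free_submodule_of_localization_free_general
    (A : Type*) [CommRing A]
    (P : Type*) [AddCommGroup P] [Module A P]
    [Module.Finite A P]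
    (t : A) (ht : t ∈ nonZeroDivisors A) (d : ℕ)
    (hfree : Nonempty (Module.Basis (Fin d) (Localization.Away t)
      (LocalizedModule (Submonoid.powers t) P))) :
    ∃ (F : Submodule A P) (l : ℕ), 0 < l ∧
      Nonempty (F ≃ₗ[A] (Fin d → A)) ∧
      ∀ x : P, t ^ l • x ∈ F := by
  obtain ⟨b⟩ := hfree
  obtain ⟨F, ⟨_, n, rfl⟩, ⟨bF⟩, hF⟩ := IsLocalizedModule.exists_free_submodule_smul_mem
    (Submonoid.powers t) (LocalizedModule.mkLinearMap _ P)
    (IsLocalization.injective _ (Submonoid.powers_le.mpr ht)) b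
  refine ⟨F, n + 1, n.succ_pos, ⟨bF.equivFun⟩, fun x => ?_⟩
  rw [pow_succ', mul_smul]
  exact F.smul_mem t (hF x)

theorem exists_free_submodule_of_localization_free
    (A : Type*) [CommRing A] [IsNoetherianRing A]
    (P : Type*) [AddCommGroup P] [Module A P]
    [Module.Finite A P] [Module.Projective A P]
    (t : A) (ht : t ∈ nonZeroDivisors A) (d : ℕ)
    (hfree : Nonempty (Module.Basis (Fin d) (Localization.Away t)
      (LocalizedModule (Submonoid.powers t) P))) :
    ∃ (F : Submodule A P) (l : ℕ), 0 < l ∧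
      Nonempty (F ≃ₗ[A] (Fin d → A)) ∧
      ∀ x : P, t ^ l • x ∈ F :=
  exists_free_submodule_of_localization_free_general A P t ht d hfree
end

section
/- Let A be a commutative ring, P an A-module, and (a, p) ∈ Um(A ⊕ P) a unimodular element. Suppose p ∈ Um(P), i.e., p is unimodular in P. Then there exists Δ ∈ E(A ⊕ P) (a product of transvections) such that (a, p)Δ = (1, 0), and hence (A ⊕ P)/(a,p)A ≅ P. -/
/-- The elementary subgroup `E(A ⊕ P)` of `Aut(A ⊕ P)` generated by the
transvections `Δ_q : (b, q') ↦ (b, q' + b • q)` and `Γ_α : (b, q') ↦ (b + α q', q')`. -/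
def elementarySubgroup (A : Type*) [CommRing A] (P : Type*) [AddCommGroup P]
    [Module A P] : Subgroup ((A × P) ≃ₗ[A] (A × P)) :=
  Subgroup.closure {e | (∃ q : P, ∀ x : A × P, e x = (x.1, x.2 + x.1 • q)) ∨
    (∃ α : P →ₗ[A] A, ∀ x : A × P, e x = (x.1 + α x.2, x.2))}

/-- The transvection `Δ_q : (b, q') ↦ (b, q' + b • q)` as a linear equivalence. -/
def tvDelta (A : Type*) [CommRing A] {P : Type*} [AddCommGroup P] [Module A P]
    (q : P) : (A × P) ≃ₗ[A] (A × P) where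
  toFun x := (x.1, x.2 + x.1 • q)
  invFun x := (x.1, x.2 - x.1 • q)
  left_inv x := by simp
  right_inv x := by simp
  map_add' x y := by
    ext <;> simp [add_smul] <;> abel
  map_smul' c x := by
    ext <;> simp [smul_smul, smul_add]

/-- The transvection `Γ_α : (b, q') ↦ (b + α q', q')` as a linear equivalence. -/
def tvGamma (A : Type*) [CommRing A] {P : Type*} [AddCommGroup P] [Module A P]
    (α : P →ₗ[A] A) : (A × P) ≃ₗ[A] (A × P) where
  toFun x := (x.1 + α x.2, x.2)
  invFun x := (x.1 - α x.2, x.2)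
  left_inv x := by simp
  right_inv x := by simp
  map_add' x y := by
    ext <;> simp <;> ring
  map_smul' c x := by
    ext <;> simp [mul_add]

theorem unimodular_with_unimodular_p_completable
    (A : Type*) [CommRing A] (P : Type*) [AddCommGroup P] [Module A P]
    (a : A) (p : P)
    (hunim : ∃ f : (A × P) →ₗ[A] A, f (a, p) = 1)
    (hp : ∃ ψ : P →ₗ[A] A, ψ p = 1) :
    (∃ Δ ∈ elementarySubgroup A P, Δ (a, p) = ((1 : A), (0 : P))) ∧
    Nonempty (((A × P) ⧸ Submodule.span A {(a, p)}) ≃ₗ[A] P) := by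
  obtain ⟨ψ, hψ⟩ := hp
  set Δ : (A × P) ≃ₗ[A] (A × P) := tvDelta A (-p) * tvGamma A ((1 - a) • ψ) with hΔdef
  have hΔmem : Δ ∈ elementarySubgroup A P := by
    apply mul_mem
    · exact Subgroup.subset_closure (Or.inl ⟨-p, fun x => rfl⟩)
    · exact Subgroup.subset_closure (Or.inr ⟨(1 - a) • ψ, fun x => rfl⟩)
  have hΔap : Δ (a, p) = ((1 : A), (0 : P)) := by
    show tvDelta A (-p) (tvGamma A ((1 - a) • ψ) (a, p)) = (1, 0)
    simp [tvDelta, tvGamma, hψ]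
  refine ⟨⟨Δ, hΔmem, hΔap⟩, ?_⟩
  have hmap : (Submodule.span A {(a, p)}).map (Δ : (A × P) →ₗ[A] (A × P)) =
      Submodule.span A {((1 : A), (0 : P))} := by
    rw [Submodule.map_span, Set.image_singleton]
    congr 1
    rw [show (Δ : (A × P) →ₗ[A] (A × P)) (a, p) = Δ (a, p) from rfl, hΔap]
  have e1 : ((A × P) ⧸ Submodule.span A {(a, p)}) ≃ₗ[A]
      ((A × P) ⧸ Submodule.span A {((1 : A), (0 : P))}) :=
    Submodule.Quotient.equiv _ _ Δ hmap
  have hker : Submodule.span A {((1 : A), (0 : P))} = LinearMap.ker (LinearMap.snd A A P) := by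
    ext x
    simp only [Submodule.mem_span_singleton, LinearMap.mem_ker, LinearMap.snd_apply]
    constructor
    · rintro ⟨c, rfl⟩; simp
    · intro h
      exact ⟨x.1, by ext <;> simp [h]⟩
  have e2 : ((A × P) ⧸ Submodule.span A {((1 : A), (0 : P))}) ≃ₗ[A] P := by
    rw [hker]
    exact (LinearMap.snd A A P).quotKerEquivOfSurjective (fun y => ⟨(0, y), rfl⟩)
  exact ⟨e1.trans e2⟩
end
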